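/- arXiv:2306.06056 — 3 statements merged into one kernel-verified Lean document; each statement's English description precedes it below -/
import Mathlib

section
/- Let n, l₀, …, l_k ∈ ℕ, l = Σᵢ lᵢ, let S₀, …, S_k ⊆ [n] with T = ∪ᵢ Sᵢ, and fix injective maps αᵢ : Sᵢ → [lᵢ] and α : T → [l]. Then there exists an invertible matrix Λ ∈ F₂^{l×l} such that the vertical stacking of the incomplete permutation matrices D(S₀), …, D(S_k) equals Λ · D(T), where D(T) ∈ F₂^{l×n} is the incomplete permutation matrix with column support T. -/
open Matrix

/-- Incomplete permutation matrix with column support `S` and labeling `α`. -/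
def ipm {ι κ : Type*} [DecidableEq ι] [DecidableEq κ] (S : Finset κ) (α : κ → ι) :
    Matrix ι κ (ZMod 2) :=
  Matrix.of fun i j => if j ∈ S ∧ α j = i then 1 else 0

/-- Stacking the incomplete permutation matrices `D(S₀), …, D(S_k)` (rows indexed by
`Σ i, Fin (l i)`, i.e. `l = Σᵢ lᵢ` rows) equals `Λ · D(T)` for some invertible `Λ`,
where `T = ⋃ᵢ Sᵢ`. -/
theorem stacked_ipm_eq_unit_mul {n k : ℕ} (l : Fin (k + 1) → ℕ)
    (S : Fin (k + 1) → Finset (Fin n))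
    (α : (i : Fin (k + 1)) → Fin n → Fin (l i))
    (hα : ∀ i, Set.InjOn (α i) ↑(S i))
    (β : Fin n → (i : Fin (k + 1)) × Fin (l i))
    (hβ : Set.InjOn β ↑(Finset.univ.biUnion S)) :
    ∃ Λ : Matrix ((i : Fin (k + 1)) × Fin (l i)) ((i : Fin (k + 1)) × Fin (l i)) (ZMod 2),
      IsUnit Λ ∧
      (Matrix.of fun (p : (i : Fin (k + 1)) × Fin (l i)) (j : Fin n) =>
          ipm (S p.1) (α p.1) p.2 j) =
        Λ * ipm (Finset.univ.biUnion S) β := by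
  classical
  set T : Finset (Fin n) := Finset.univ.biUnion S with hT
  have hexists : ∀ j ∈ T, ∃ i, j ∈ S i := by
    intro j hj
    simpa [hT, Finset.mem_biUnion] using hj
  set idx : Fin n → Fin (k + 1) := fun j =>
    if h : ∃ i, j ∈ S i then h.choose else 0 with hidxdef
  set ρ : Fin n → (i : Fin (k + 1)) × Fin (l i) := fun j => ⟨idx j, α (idx j) j⟩ with hρdef
  have hidx : ∀ j ∈ T, j ∈ S (idx j) := by
    intro j hj
    have h := hexists j hj
    simp only [hidxdef, dif_pos h]
    exact h.choose_spec
  have hρinj : Set.InjOn ρ ↑T := by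
    intro j hj j' hj' hjj
    have h1 : idx j = idx j' := congrArg Sigma.fst hjj
    have h2 : HEq (α (idx j) j) (α (idx j') j') := (Sigma.mk.inj_iff.mp hjj).2
    have hv : ((α (idx j) j : ℕ)) = (α (idx j') j' : ℕ) :=
      (Fin.heq_ext_iff (congrArg l h1)).mp h2
    refine hα (idx j) (hidx j hj) (h1 ▸ hidx j' hj') ?_
    refine Fin.val_injective ?_
    exact hv.trans (congrArg (fun i => ((α i j' : ℕ))) h1).symm
  set A : Finset ((i : Fin (k + 1)) × Fin (l i)) := T.image β with hA
  set B : Finset ((i : Fin (k + 1)) × Fin (l i)) := T.image ρ with hB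
  have hcard : Aᶜ.card = Bᶜ.card := by
    rw [Finset.card_compl, Finset.card_compl, hA, hB,
      Finset.card_image_of_injOn hβ, Finset.card_image_of_injOn hρinj]
  set e : {x // x ∈ Aᶜ} ≃ {x // x ∈ Bᶜ} := Finset.equivOfCardEq hcard with he
  set M : Matrix ((i : Fin (k + 1)) × Fin (l i)) (Fin n) (ZMod 2) :=
    Matrix.of fun p j => ipm (S p.1) (α p.1) p.2 j with hM
  set D : Matrix ((i : Fin (k + 1)) × Fin (l i)) (Fin n) (ZMod 2) := ipm T β with hD
  set K : Matrix ((i : Fin (k + 1)) × Fin (l i)) ((i : Fin (k + 1)) × Fin (l i)) (ZMod 2) :=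
    Matrix.of fun p q => if h : q ∈ Aᶜ then (if p = (e ⟨q, h⟩ : {x // x ∈ Bᶜ}) then 1 else 0) else 0
    with hK
  have hMapp : ∀ p j, M p j = if j ∈ S p.1 ∧ α p.1 j = p.2 then 1 else 0 := fun p j => rfl
  have hDapp : ∀ q j, D q j = if j ∈ T ∧ β j = q then 1 else 0 := fun q j => rfl
  -- row of M at a pivot
  have hMrow : ∀ j ∈ T, ∀ j', M (ρ j) j' = if j' = j then 1 else 0 := by
    intro j hj j'
    rw [hMapp]
    by_cases h : j' = j
    · subst h
      rw [if_pos rfl, if_pos]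
      exact ⟨hidx _ hj, rfl⟩
    · rw [if_neg h, if_neg]
      rintro ⟨hmem, heq⟩
      exact h (hα (idx j) hmem (hidx j hj) heq)
  -- rows of M*Dᵀ at a pivot
  have hMDrow : ∀ j ∈ T, ∀ q, (M * Dᵀ) (ρ j) q = if β j = q then 1 else 0 := by
    intro j hj q
    rw [Matrix.mul_apply]
    have : ∀ j', M (ρ j) j' * Dᵀ j' q = if j = j' then D q j' else 0 := by
      intro j'
      rw [hMrow j hj, Matrix.transpose_apply]
      by_cases h : j' = j
      · rw [if_pos h, one_mul, if_pos h.symm, h]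
      · rw [if_neg h, zero_mul, if_neg (fun hc => h hc.symm)]
    simp only [this, Finset.sum_ite_eq, Finset.mem_univ, if_pos, hDapp, hj, true_and]
  -- K row at a pivot is zero
  have hKrow : ∀ j ∈ T, ∀ q, K (ρ j) q = 0 := by
    intro j hj q
    rw [hK]
    simp only [Matrix.of_apply]
    split
    · rename_i h
      rw [if_neg]
      intro hcontra
      have : ρ j ∈ Bᶜ := hcontra ▸ (e ⟨q, h⟩).2
      rw [Finset.mem_compl] at this
      exact this (Finset.mem_image_of_mem ρ hj)
    · rfl
  set Λ : Matrix ((i : Fin (k + 1)) × Fin (l i)) ((i : Fin (k + 1)) × Fin (l i)) (ZMod 2) :=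
    M * Dᵀ + K with hΛ
  refine ⟨Λ, ?_, ?_⟩
  · rw [← Matrix.mulVec_injective_iff_isUnit]
    have key : ∀ x, Λ *ᵥ x = 0 → x = 0 := by
      intro x hx
      have hx' : ∀ p, ∑ q, Λ p q * x q = 0 := by
        intro p
        have := congrFun hx p
        simpa [Matrix.mulVec, dotProduct] using this
      -- step 1
      have step1 : ∀ j ∈ T, x (β j) = 0 := by
        intro j hj
        have h := hx' (ρ j)
        have hrow : ∀ q, Λ (ρ j) q = if β j = q then 1 else 0 := by
          intro q
          rw [hΛ, Matrix.add_apply, hMDrow j hj, hKrow j hj, add_zero]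
        have hsum : (∑ q, Λ (ρ j) q * x q) = ∑ q, if β j = q then x q else 0 :=
          Finset.sum_congr rfl fun q _ => by
            rw [hrow]
            split
            · rw [one_mul]
            · rw [zero_mul]
        rw [hsum, Finset.sum_ite_eq, if_pos (Finset.mem_univ _)] at h
        exact h
      -- step 2
      have step2 : ∀ q (hq : q ∈ Aᶜ), x q = 0 := by
        intro q hq
        set p : (i : Fin (k + 1)) × Fin (l i) := ↑(e ⟨q, hq⟩) with hp
        have h := hx' p
        have hsum : (∑ q', Λ p q' * x q') = x q := by
          rw [hΛ]
          simp only [Matrix.add_apply, add_mul, Finset.sum_add_distrib]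
          have h1 : (∑ q', (M * Dᵀ) p q' * x q') = 0 := by
            have : ∀ q', (M * Dᵀ) p q' * x q' = ∑ j', M p j' * (Dᵀ j' q' * x q') := by
              intro q'
              rw [Matrix.mul_apply, Finset.sum_mul]
              exact Finset.sum_congr rfl fun j' _ => mul_assoc _ _ _
            rw [Finset.sum_congr rfl fun q' _ => this q', Finset.sum_comm]
            refine Finset.sum_eq_zero fun j' _ => ?_
            by_cases hj' : j' ∈ S p.1
            · have hjT : j' ∈ T := by
                rw [hT]
                exact Finset.mem_biUnion.mpr ⟨p.1, Finset.mem_univ _, hj'⟩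
              have : (∑ q', Dᵀ j' q' * x q') = x (β j') := by
                have : ∀ q', Dᵀ j' q' * x q' = if β j' = q' then x q' else 0 := by
                  intro q'
                  rw [Matrix.transpose_apply, hDapp]
                  by_cases h : β j' = q' <;> simp [h, hjT]
                rw [Finset.sum_congr rfl fun q' _ => this q', Finset.sum_ite_eq,
                  if_pos (Finset.mem_univ _)]
              rw [← Finset.mul_sum, this, step1 j' hjT, mul_zero]
            · refine Finset.sum_eq_zero fun q' _ => ?_
              rw [hMapp, if_neg (fun hc => hj' hc.1), zero_mul]
          have h2 : (∑ q', K p q' * x q') = x q := by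
            have : ∀ q', K p q' * x q' = if q = q' then x q' else 0 := by
              intro q'
              rw [hK]
              simp only [Matrix.of_apply]
              by_cases hq' : q' ∈ Aᶜ
              · rw [dif_pos hq']
                by_cases heq : q = q'
                · subst heq
                  rw [if_pos hp, if_pos rfl, one_mul]
                · rw [if_neg, if_neg heq, zero_mul]
                  intro hc
                  have : (⟨q', hq'⟩ : {x // x ∈ Aᶜ}) = ⟨q, hq⟩ :=
                    e.injective (Subtype.val_injective (by rw [← hc, hp]))
                  exact heq (congrArg Subtype.val this).symm
              · rw [dif_neg hq', if_neg, zero_mul]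
                intro hc
                exact hq' (hc ▸ hq)
            rw [Finset.sum_congr rfl fun q' _ => this q', Finset.sum_ite_eq,
              if_pos (Finset.mem_univ _)]
          rw [h1, h2, zero_add]
        rw [hsum] at h
        exact h
      funext q
      by_cases hq : q ∈ A
      · obtain ⟨j, hj, rfl⟩ := Finset.mem_image.mp hq
        exact step1 j hj
      · exact step2 q (Finset.mem_compl.mpr hq)
    intro x y hxy
    have : Λ *ᵥ (x - y) = 0 := by
      rw [Matrix.mulVec_sub, hxy, sub_self]
    have := key _ this
    exact sub_eq_zero.mp this
  · -- M = Λ * D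
    have hKD : K * D = 0 := by
      ext p j
      rw [Matrix.mul_apply, Matrix.zero_apply]
      refine Finset.sum_eq_zero fun q _ => ?_
      rw [hDapp]
      by_cases h : j ∈ T ∧ β j = q
      · rw [if_pos h, mul_one, hK]
        simp only [Matrix.of_apply]
        rw [dif_neg]
        rw [Finset.notMem_compl, ← h.2]
        exact Finset.mem_image_of_mem β h.1
      · rw [if_neg h, mul_zero]
    have hMDD : M * Dᵀ * D = M := by
      rw [Matrix.mul_assoc]
      have hDD : Dᵀ * D = Matrix.of fun j' j => if j ∈ T ∧ j' = j then (1 : ZMod 2) else 0 := by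
        ext j' j
        rw [Matrix.mul_apply, Matrix.of_apply]
        have : ∀ q, Dᵀ j' q * D q j =
            if β j' = q then (if j' ∈ T ∧ j ∈ T ∧ β j = q then 1 else 0) else 0 := by
          intro q
          rw [Matrix.transpose_apply, hDapp, hDapp]
          by_cases h1 : β j' = q <;> by_cases h2 : j' ∈ T <;> by_cases h3 : j ∈ T ∧ β j = q <;>
            simp [h1, h2, h3]
        rw [Finset.sum_congr rfl fun q _ => this q, Finset.sum_ite_eq,
          if_pos (Finset.mem_univ _)]
        by_cases h2 : j ∈ T
        · by_cases h4 : j' = j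
          · subst h4
            simp [h2]
          · rw [if_neg, if_neg (fun hc => h4 hc.2)]
            rintro ⟨hj'T, hjT, hbb⟩
            exact h4 (hβ hj'T h2 hbb.symm)
        · simp [h2]
      rw [hDD]
      ext p j
      simp only [Matrix.mul_apply, Matrix.of_apply]
      have : ∀ j', M p j' * (if j ∈ T ∧ j' = j then (1 : ZMod 2) else 0) =
          if j = j' then (if j ∈ T then M p j else 0) else 0 := by
        intro j'
        by_cases h1 : j = j'
        · subst h1
          by_cases h2 : j ∈ T
          · rw [if_pos ⟨h2, rfl⟩, mul_one, if_pos rfl, if_pos h2]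
          · rw [if_neg (by tauto), mul_zero, if_pos rfl, if_neg h2]
        · rw [if_neg (fun hc => h1 hc.2.symm), mul_zero, if_neg h1]
      rw [Finset.sum_congr rfl fun j' _ => this j', Finset.sum_ite_eq,
        if_pos (Finset.mem_univ _)]
      by_cases h2 : j ∈ T
      · rw [if_pos h2]
      · rw [if_neg h2, hMapp, if_neg]
        rintro ⟨hmem, -⟩
        exact h2 (by rw [hT]; exact Finset.mem_biUnion.mpr ⟨p.1, Finset.mem_univ _, hmem⟩)
    have : Λ * D = M := by
      rw [hΛ, Matrix.add_mul, hKD, add_zero, hMDD]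
    rw [this]
end

section
/- Let H₁ᵡ,…,H_mᵡ and H₁ᶻ,…,H_mᶻ be matrices over F₂ with Hᵢᵡ ∈ F₂^{lᵢᵡ×nᵢ}, Hᵢᶻ ∈ F₂^{lᵢᶻ×nᵢ}, and Hᵢᵡ·(Hᵢᶻ)ᵀ = 0 for all i. Let X₀,…,X_{u−1} and Z₀,…,Z_{v−1} be subsets of [m] such that Xᵢ ∩ Z_j ≠ ∅ for all i, j. Then for all i, j, M(Hᵡ, Xᵢ)·M(Hᶻ, Z_j)ᵀ = 0, where M(H, S) = ⊗_{k} (H_k if k ∈ S else I_{n_k}). Consequently the pair of stacked matrices (M(Hᵡ, X₀);…;M(Hᵡ, X_{u−1})) and (M(Hᶻ, Z₀);…;M(Hᶻ, Z_{v−1})) defines a valid quantum CSS code. -/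
open Matrix

variable {m : ℕ}

/-- `M(H, X) = ⊗ᵢ (Hᵢ if i ∈ X else I)`, with rows and columns indexed by tuples. -/
def Mlay {l n : Fin m → ℕ}
    (H : ∀ i, Matrix (Fin (l i)) (Fin (n i)) (ZMod 2)) (X : Finset (Fin m)) :
    Matrix ((i : Fin m) → Fin (if i ∈ X then l i else n i)) ((i : Fin m) → Fin (n i))
      (ZMod 2) :=
  Matrix.of fun r c =>
    ∏ i, (if h : i ∈ X then H i (Fin.cast (if_pos h) (r i)) (c i)
          else if ((r i : ℕ) = (c i : ℕ)) then 1 else 0)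

theorem mlay_orth {lx lz n : Fin m → ℕ}
    (Hx : ∀ i, Matrix (Fin (lx i)) (Fin (n i)) (ZMod 2))
    (Hz : ∀ i, Matrix (Fin (lz i)) (Fin (n i)) (ZMod 2))
    (hH : ∀ i, Hx i * (Hz i)ᵀ = 0)
    (X Z : Finset (Fin m)) (hXZ : (X ∩ Z).Nonempty) :
    Mlay Hx X * (Mlay Hz Z)ᵀ = 0 := by
  obtain ⟨k, hk⟩ := hXZ
  rw [Finset.mem_inter] at hk
  ext r s
  simp only [Matrix.mul_apply, Matrix.transpose_apply, Mlay, Matrix.of_apply,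
    Matrix.zero_apply]
  have step : ∀ c : (i : Fin m) → Fin (n i),
      (∏ i, (if h : i ∈ X then Hx i (Fin.cast (if_pos h) (r i)) (c i)
          else if ((r i : ℕ) = (c i : ℕ)) then 1 else 0)) *
      (∏ i, (if h : i ∈ Z then Hz i (Fin.cast (if_pos h) (s i)) (c i)
          else if ((s i : ℕ) = (c i : ℕ)) then 1 else 0)) =
      ∏ i, ((if h : i ∈ X then Hx i (Fin.cast (if_pos h) (r i)) (c i)
          else if ((r i : ℕ) = (c i : ℕ)) then 1 else 0) *
        (if h : i ∈ Z then Hz i (Fin.cast (if_pos h) (s i)) (c i)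
          else if ((s i : ℕ) = (c i : ℕ)) then 1 else 0)) := fun c =>
    (Finset.prod_mul_distrib).symm
  rw [Finset.sum_congr rfl fun c _ => step c, ← Fintype.piFinset_univ,
    ← Finset.prod_univ_sum (fun _ => Finset.univ)
      (fun i (x : Fin (n i)) =>
        (if h : i ∈ X then Hx i (Fin.cast (if_pos h) (r i)) x
          else if ((r i : ℕ) = (x : ℕ)) then 1 else 0) *
        (if h : i ∈ Z then Hz i (Fin.cast (if_pos h) (s i)) x
          else if ((s i : ℕ) = (x : ℕ)) then 1 else 0))]
  apply Finset.prod_eq_zero (Finset.mem_univ k)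
  simp only [dif_pos hk.1, dif_pos hk.2]
  have := congrFun (congrFun (hH k) (Fin.cast (if_pos hk.1) (r k)))
    (Fin.cast (if_pos hk.2) (s k))
  simpa [Matrix.mul_apply, Matrix.transpose_apply] using this

/-- Given component CSS codes `Hᵢˣ (Hᵢᶻ)ᵀ = 0` and fully intersecting families `X, Z`,
all layers are orthogonal, and the stacked matrices `M(Hˣ,X), M(Hᶻ,Z)` form a valid CSS
code, i.e. `M(Hˣ,X) · M(Hᶻ,Z)ᵀ = 0`. -/
theorem intersecting_subsets_css {u v : ℕ} {lx lz n : Fin m → ℕ}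
    (Hx : ∀ i, Matrix (Fin (lx i)) (Fin (n i)) (ZMod 2))
    (Hz : ∀ i, Matrix (Fin (lz i)) (Fin (n i)) (ZMod 2))
    (hH : ∀ i, Hx i * (Hz i)ᵀ = 0)
    (X : Fin u → Finset (Fin m)) (Z : Fin v → Finset (Fin m))
    (hXZ : ∀ i j, (X i ∩ Z j).Nonempty) :
    (∀ i j, Mlay Hx (X i) * (Mlay Hz (Z j))ᵀ = 0) ∧
    (Matrix.of fun (p : (i : Fin u) × ((k : Fin m) → Fin (if k ∈ X i then lx k else n k)))
        (c : (k : Fin m) → Fin (n k)) => Mlay Hx (X p.1) p.2 c) *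
      (Matrix.of fun (q : (j : Fin v) × ((k : Fin m) → Fin (if k ∈ Z j then lz k else n k)))
        (c : (k : Fin m) → Fin (n k)) => Mlay Hz (Z q.1) q.2 c)ᵀ = 0 := by
  have h1 : ∀ i j, Mlay Hx (X i) * (Mlay Hz (Z j))ᵀ = 0 := fun i j =>
    mlay_orth Hx Hz hH (X i) (Z j) (hXZ i j)
  refine ⟨h1, ?_⟩
  ext ⟨i, r⟩ ⟨j, s⟩
  have := congrFun (congrFun (h1 i j) r) s
  simpa [Matrix.mul_apply, Matrix.transpose_apply] using this
end

section
/- Let S ⊆ {0,1}^m be a decreasing set generated by S₀,…,S_{u−1} and let T ⊆ {0,1}^m be the increasing set generated by the complements T_j = 1⃗ − S_j. Define GRM(↓S) = RowSpan(D(↓S)·R_m) and GRM'(↑T) = RowSpan(D(↑T)·(R_m⁻¹)ᵀ), where D(U) is an incomplete permutation matrix with column support U ⊆ {0,1}^m, and R_m = [[1,1],[0,1]]^{⊗m} over F₂. Then GRM(↓S) = GRM'(↑T) = RowSpan(M(T)), where M(T) is the vertical stack of the matrices ⊗_{i}(H if i ∈ T_j else I₂) with H = [1 1]. -/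
open Matrix

noncomputable section
open scoped Classical

/-- `R_m = [[1,1],[0,1]]^{⊗m}` over F₂. -/
def Rcube (m : ℕ) : Matrix (Fin m → Fin 2) (Fin m → Fin 2) (ZMod 2) :=
  Matrix.of fun r c => ∏ i, (!![1, 1; 0, 1] : Matrix (Fin 2) (Fin 2) (ZMod 2)) (r i) (c i)

/-- Incomplete permutation matrix `D(U)` with one row per element `u ∈ U`, having a single
`1` in column `u`. -/
def Dmat {m : ℕ} (U : Set (Fin m → Fin 2)) : Matrix U (Fin m → Fin 2) (ZMod 2) :=
  Matrix.of fun u v => if v = (u : Fin m → Fin 2) then 1 else 0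

/-- The row span of a matrix. -/
def rowSpan {ι : Type*} {m : ℕ} (A : Matrix ι (Fin m → Fin 2) (ZMod 2)) :
    Submodule (ZMod 2) ((Fin m → Fin 2) → ZMod 2) :=
  Submodule.span (ZMod 2) (Set.range A)

/-- `GRM(U) = RowSpan(D(U) · R_m)`. -/
def GRM {m : ℕ} (U : Set (Fin m → Fin 2)) :
    Submodule (ZMod 2) ((Fin m → Fin 2) → ZMod 2) :=
  rowSpan (Dmat U * Rcube m)

/-- `GRM'(U) = RowSpan(D(U) · (R_m⁻¹)ᵀ)`. -/
def GRMT {m : ℕ} (U : Set (Fin m → Fin 2)) :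
    Submodule (ZMod 2) ((Fin m → Fin 2) → ZMod 2) :=
  rowSpan (Dmat U * ((Rcube m)⁻¹)ᵀ)

/-- The vertical stack `M(T)` of the matrices `⊗ᵢ ([1 1] if i ∈ T_j else I₂)`, where
`i ∈ T_j ↔ S j i = 0` (i.e. `T_j` is the complement of `S_j`). -/
def Mstack {m u : ℕ} (S : Fin u → (Fin m → Fin 2)) :
    Matrix ((j : Fin u) × ((i : Fin m) → Fin (if S j i = 0 then 1 else 2)))
      (Fin m → Fin 2) (ZMod 2) :=
  Matrix.of fun p c =>
    ∏ i, (if S p.1 i = 0 then (1 : ZMod 2)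
          else if ((p.2 i : ℕ) = (c i : ℕ)) then 1 else 0)

lemma R_entry (a b : Fin 2) :
    (!![1, 1; 0, 1] : Matrix (Fin 2) (Fin 2) (ZMod 2)) a b = if a ≤ b then 1 else 0 := by
  fin_cases a <;> fin_cases b <;> decide
lemma Rcube_apply {m : ℕ} (x y : Fin m → Fin 2) :
    Rcube m x y = ∏ i, (if x i ≤ y i then (1 : ZMod 2) else 0) := by
  simp only [Rcube, Matrix.of_apply]
  exact Finset.prod_congr rfl fun i _ => R_entry _ _
lemma fin2_RR (a b : Fin 2) :
    ∑ k : Fin 2, (if a ≤ k then (1 : ZMod 2) else 0) * (if k ≤ b then 1 else 0) =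
      if a = b then 1 else 0 := by
  fin_cases a <;> fin_cases b <;> decide
lemma Rcube_mul_self {m : ℕ} : Rcube m * Rcube m = 1 := by
  ext x z
  rw [Matrix.mul_apply]
  calc ∑ y, Rcube m x y * Rcube m y z
      = ∑ y : Fin m → Fin 2, ∏ i,
          ((if x i ≤ y i then (1 : ZMod 2) else 0) * (if y i ≤ z i then 1 else 0)) := by
        refine Finset.sum_congr rfl fun y _ => ?_
        rw [Rcube_apply, Rcube_apply, ← Finset.prod_mul_distrib]
    _ = ∏ i, ∑ k : Fin 2,
          ((if x i ≤ k then (1 : ZMod 2) else 0) * (if k ≤ z i then 1 else 0)) :=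
        (Fintype.prod_sum (fun i k =>
          (if x i ≤ k then (1 : ZMod 2) else 0) * (if k ≤ z i then 1 else 0))).symm
    _ = ∏ i, (if x i = z i then (1 : ZMod 2) else 0) :=
        Finset.prod_congr rfl fun i _ => fin2_RR _ _
    _ = (1 : Matrix (Fin m → Fin 2) (Fin m → Fin 2) (ZMod 2)) x z := by
        rw [Matrix.one_apply]
        by_cases h : x = z
        · simp [h]
        · obtain ⟨i, hi⟩ := Function.ne_iff.mp h
          rw [if_neg h]
          exact Finset.prod_eq_zero (Finset.mem_univ i) (if_neg hi)
lemma Rcube_inv {m : ℕ} : (Rcube m)⁻¹ = Rcube m := Matrix.inv_eq_right_inv Rcube_mul_self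
def upRow {m : ℕ} (a : Fin m → Fin 2) : (Fin m → Fin 2) → ZMod 2 :=
  fun y => ∏ i, (if a i ≤ y i then (1 : ZMod 2) else 0)
def downRow {m : ℕ} (b : Fin m → Fin 2) : (Fin m → Fin 2) → ZMod 2 :=
  fun y => ∏ i, (if y i ≤ b i then (1 : ZMod 2) else 0)
lemma GRM_row {m : ℕ} (U : Set (Fin m → Fin 2)) (u : U) :
    (Dmat U * Rcube m) u = upRow (u : Fin m → Fin 2) := by
  funext y
  show ∑ v, Dmat U u v * Rcube m v y = _
  rw [Finset.sum_eq_single (u : Fin m → Fin 2)]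
  · rw [show Dmat U u u = 1 from if_pos rfl, one_mul, Rcube_apply]; rfl
  · intro v _ hv
    rw [show Dmat U u v = 0 from if_neg hv, zero_mul]
  · intro h; exact absurd (Finset.mem_univ _) h
lemma GRMT_row {m : ℕ} (U : Set (Fin m → Fin 2)) (u : U) :
    (Dmat U * ((Rcube m)⁻¹)ᵀ) u = downRow (u : Fin m → Fin 2) := by
  funext y
  show ∑ v, Dmat U u v * ((Rcube m)⁻¹)ᵀ v y = _
  rw [Finset.sum_eq_single (u : Fin m → Fin 2)]
  · rw [show Dmat U u u = 1 from if_pos rfl, one_mul, Matrix.transpose_apply, Rcube_inv,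
      Rcube_apply]; rfl
  · intro v _ hv
    rw [show Dmat U u v = 0 from if_neg hv, zero_mul]
  · intro h; exact absurd (Finset.mem_univ _) h

-- per-coordinate identities
lemma per1 (s a yv : Fin 2) (ha : a ≤ s) :
    (if a ≤ yv then (1 : ZMod 2) else 0) =
      ∑ k : Fin (if s = 0 then 1 else 2),
        (if s = 0 then (1 : ZMod 2) else if (a : ℕ) ≤ (k : ℕ) then 1 else 0) *
        (if s = 0 then (1 : ZMod 2) else if ((k : ℕ) = (yv : ℕ)) then 1 else 0) := by
  revert ha; fin_cases s <;> fin_cases a <;> fin_cases yv <;> decide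
lemma per2 (s yv : Fin 2) (k : Fin (if s = 0 then 1 else 2)) :
    (if s = 0 then (1 : ZMod 2) else if ((k : ℕ) = (yv : ℕ)) then 1 else 0) =
      ∑ t : Fin 2,
        (if s = 0 then (if t = 0 then (1 : ZMod 2) else 0)
          else if (k : ℕ) ≤ (t : ℕ) then 1 else 0) *
        (if t ≤ yv then 1 else 0) := by
  revert k; fin_cases s <;> fin_cases yv <;> decide
lemma per3 (s bv yv : Fin 2) (h : s = 0 → bv = 1) :
    (if yv ≤ bv then (1 : ZMod 2) else 0) =
      ∑ k : Fin (if s = 0 then 1 else 2),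
        (if s = 0 then (1 : ZMod 2) else if (k : ℕ) ≤ (bv : ℕ) then 1 else 0) *
        (if s = 0 then (1 : ZMod 2) else if ((k : ℕ) = (yv : ℕ)) then 1 else 0) := by
  revert h; fin_cases s <;> fin_cases bv <;> fin_cases yv <;> decide
lemma per4 (s yv : Fin 2) (k : Fin (if s = 0 then 1 else 2)) :
    (if s = 0 then (1 : ZMod 2) else if ((k : ℕ) = (yv : ℕ)) then 1 else 0) =
      ∑ t : Fin 2,
        (if s = 0 then (if t = 1 then (1 : ZMod 2) else 0)
          else if (t : ℕ) ≤ (k : ℕ) then 1 else 0) *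
        (if yv ≤ t then 1 else 0) := by
  revert k; fin_cases s <;> fin_cases yv <;> decide
lemma Mstack_apply {m u : ℕ} (S : Fin u → (Fin m → Fin 2))
    (p : (j : Fin u) × ((i : Fin m) → Fin (if S j i = 0 then 1 else 2)))
    (c : Fin m → Fin 2) :
    Mstack S p c = ∏ i, (if S p.1 i = 0 then (1 : ZMod 2)
          else if ((p.2 i : ℕ) = (c i : ℕ)) then 1 else 0) := rfl
lemma coeff1_zero (s t : Fin 2) (x : ZMod 2) (h : ¬ t ≤ s) :
    (if s = 0 then (if t = 0 then (1 : ZMod 2) else 0) else x) = 0 := by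
  revert h
  fin_cases s <;> fin_cases t <;> intro h <;>
    first | exact absurd (by decide) h | simp
lemma coeff2_zero (s t bv : Fin 2) (x : ZMod 2) (ht : t = 1 - s) (h : ¬ t ≤ bv) :
    (if s = 0 then (if bv = 1 then (1 : ZMod 2) else 0) else x) = 0 := by
  revert ht h
  fin_cases s <;> fin_cases t <;> fin_cases bv <;> intro ht h <;>
    first | exact absurd (by decide) h | exact absurd ht (by decide) | simp
lemma upRow_mem {m u : ℕ} (S : Fin u → (Fin m → Fin 2)) (j : Fin u)
    (a : Fin m → Fin 2) (ha : a ≤ S j) :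
    upRow a ∈ rowSpan (Mstack S) := by
  have key : upRow a = ∑ p : ((i : Fin m) → Fin (if S j i = 0 then 1 else 2)),
      (∏ i, (if S j i = 0 then (1 : ZMod 2)
             else if (a i : ℕ) ≤ ((p i : Fin _) : ℕ) then 1 else 0)) • Mstack S ⟨j, p⟩ := by
    funext y
    rw [Finset.sum_apply]
    calc upRow a y
        = ∏ i, ∑ k : Fin (if S j i = 0 then 1 else 2),
            ((if S j i = 0 then (1 : ZMod 2) else if (a i : ℕ) ≤ (k : ℕ) then 1 else 0) *
             (if S j i = 0 then (1 : ZMod 2) else if ((k : ℕ) = (y i : ℕ)) then 1 else 0)) :=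
          Finset.prod_congr rfl fun i _ => per1 (S j i) (a i) (y i) (ha i)
      _ = ∑ p : ((i : Fin m) → Fin (if S j i = 0 then 1 else 2)), ∏ i,
            ((if S j i = 0 then (1 : ZMod 2) else if (a i : ℕ) ≤ (p i : ℕ) then 1 else 0) *
             (if S j i = 0 then (1 : ZMod 2) else if ((p i : ℕ) = (y i : ℕ)) then 1 else 0)) :=
          Fintype.prod_sum _
      _ = ∑ p : ((i : Fin m) → Fin (if S j i = 0 then 1 else 2)),
            ((∏ i, (if S j i = 0 then (1 : ZMod 2)
               else if (a i : ℕ) ≤ (p i : ℕ) then 1 else 0)) • Mstack S ⟨j, p⟩) y := by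
          refine Finset.sum_congr rfl fun p _ => ?_
          rw [Pi.smul_apply, smul_eq_mul, Mstack_apply, ← Finset.prod_mul_distrib]
  rw [key]
  exact Submodule.sum_mem _ fun p _ =>
    Submodule.smul_mem _ _ (Submodule.subset_span ⟨⟨j, p⟩, rfl⟩)
lemma mstack_mem_GRM {m u : ℕ} (S : Fin u → (Fin m → Fin 2))
    (p : (j : Fin u) × ((i : Fin m) → Fin (if S j i = 0 then 1 else 2))) :
    Mstack S p ∈ GRM {x | ∃ j, x ≤ S j} := by
  obtain ⟨j, q⟩ := p
  have key : Mstack S ⟨j, q⟩ = ∑ a : Fin m → Fin 2,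
      (∏ i, (if S j i = 0 then (if a i = 0 then (1 : ZMod 2) else 0)
             else if (q i : ℕ) ≤ (a i : ℕ) then 1 else 0)) • upRow a := by
    funext y
    rw [Finset.sum_apply]
    calc Mstack S ⟨j, q⟩ y
        = ∏ i, (if S j i = 0 then (1 : ZMod 2)
            else if ((q i : ℕ) = (y i : ℕ)) then 1 else 0) := Mstack_apply S ⟨j, q⟩ y
      _ = ∏ i, ∑ t : Fin 2,
            ((if S j i = 0 then (if t = 0 then (1 : ZMod 2) else 0)
              else if (q i : ℕ) ≤ (t : ℕ) then 1 else 0) *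
             (if t ≤ y i then 1 else 0)) :=
          Finset.prod_congr rfl fun i _ => per2 (S j i) (y i) (q i)
      _ = ∑ a : Fin m → Fin 2, ∏ i,
            ((if S j i = 0 then (if a i = 0 then (1 : ZMod 2) else 0)
              else if (q i : ℕ) ≤ (a i : ℕ) then 1 else 0) *
             (if a i ≤ y i then 1 else 0)) :=
          Fintype.prod_sum _
      _ = ∑ a : Fin m → Fin 2,
            ((∏ i, (if S j i = 0 then (if a i = 0 then (1 : ZMod 2) else 0)
               else if (q i : ℕ) ≤ (a i : ℕ) then 1 else 0)) • upRow a) y := by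
          refine Finset.sum_congr rfl fun a _ => ?_
          rw [Pi.smul_apply, smul_eq_mul, upRow, ← Finset.prod_mul_distrib]
  rw [key]
  refine Submodule.sum_mem _ fun a _ => ?_
  by_cases h : a ≤ S j
  · exact Submodule.smul_mem _ _ (Submodule.subset_span ⟨⟨a, ⟨j, h⟩⟩, GRM_row _ _⟩)
  · have hz : (∏ i, (if S j i = 0 then (if a i = 0 then (1 : ZMod 2) else 0)
             else if (q i : ℕ) ≤ (a i : ℕ) then 1 else 0)) = 0 := by
      rw [Pi.le_def] at h
      obtain ⟨i, hi⟩ := not_forall.mp h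
      exact Finset.prod_eq_zero (Finset.mem_univ i) (coeff1_zero (S j i) (a i) _ hi)
    rw [hz, zero_smul]
    exact Submodule.zero_mem _
lemma downRow_mem {m u : ℕ} (S T : Fin u → (Fin m → Fin 2))
    (hT : ∀ j i, T j i = 1 - S j i) (j : Fin u)
    (b : Fin m → Fin 2) (hb : T j ≤ b) :
    downRow b ∈ rowSpan (Mstack S) := by
  have h0 : ∀ i, S j i = 0 → b i = 1 := by
    intro i hsi
    have h1 : T j i = 1 := by rw [hT j i, hsi]; decide
    have h2 : (1 : Fin 2) ≤ b i := h1 ▸ hb i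
    have h3 : ∀ t : Fin 2, 1 ≤ t → t = 1 := by decide
    exact h3 _ h2
  have key : downRow b = ∑ p : ((i : Fin m) → Fin (if S j i = 0 then 1 else 2)),
      (∏ i, (if S j i = 0 then (1 : ZMod 2)
             else if (p i : ℕ) ≤ (b i : ℕ) then 1 else 0)) • Mstack S ⟨j, p⟩ := by
    funext y
    rw [Finset.sum_apply]
    calc downRow b y
        = ∏ i, ∑ k : Fin (if S j i = 0 then 1 else 2),
            ((if S j i = 0 then (1 : ZMod 2) else if (k : ℕ) ≤ (b i : ℕ) then 1 else 0) *
             (if S j i = 0 then (1 : ZMod 2) else if ((k : ℕ) = (y i : ℕ)) then 1 else 0)) :=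
          Finset.prod_congr rfl fun i _ => per3 (S j i) (b i) (y i) (h0 i)
      _ = ∑ p : ((i : Fin m) → Fin (if S j i = 0 then 1 else 2)), ∏ i,
            ((if S j i = 0 then (1 : ZMod 2) else if (p i : ℕ) ≤ (b i : ℕ) then 1 else 0) *
             (if S j i = 0 then (1 : ZMod 2) else if ((p i : ℕ) = (y i : ℕ)) then 1 else 0)) :=
          Fintype.prod_sum _
      _ = ∑ p : ((i : Fin m) → Fin (if S j i = 0 then 1 else 2)),
            ((∏ i, (if S j i = 0 then (1 : ZMod 2)
               else if (p i : ℕ) ≤ (b i : ℕ) then 1 else 0)) • Mstack S ⟨j, p⟩) y := by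
          refine Finset.sum_congr rfl fun p _ => ?_
          rw [Pi.smul_apply, smul_eq_mul, Mstack_apply, ← Finset.prod_mul_distrib]
  rw [key]
  exact Submodule.sum_mem _ fun p _ =>
    Submodule.smul_mem _ _ (Submodule.subset_span ⟨⟨j, p⟩, rfl⟩)
lemma mstack_mem_GRMT {m u : ℕ} (S T : Fin u → (Fin m → Fin 2))
    (hT : ∀ j i, T j i = 1 - S j i)
    (p : (j : Fin u) × ((i : Fin m) → Fin (if S j i = 0 then 1 else 2))) :
    Mstack S p ∈ GRMT {x | ∃ j, T j ≤ x} := by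
  obtain ⟨j, q⟩ := p
  have key : Mstack S ⟨j, q⟩ = ∑ b : Fin m → Fin 2,
      (∏ i, (if S j i = 0 then (if b i = 1 then (1 : ZMod 2) else 0)
             else if (b i : ℕ) ≤ (q i : ℕ) then 1 else 0)) • downRow b := by
    funext y
    rw [Finset.sum_apply]
    calc Mstack S ⟨j, q⟩ y
        = ∏ i, (if S j i = 0 then (1 : ZMod 2)
            else if ((q i : ℕ) = (y i : ℕ)) then 1 else 0) := Mstack_apply S ⟨j, q⟩ y
      _ = ∏ i, ∑ t : Fin 2,
            ((if S j i = 0 then (if t = 1 then (1 : ZMod 2) else 0)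
              else if (t : ℕ) ≤ (q i : ℕ) then 1 else 0) *
             (if y i ≤ t then 1 else 0)) :=
          Finset.prod_congr rfl fun i _ => per4 (S j i) (y i) (q i)
      _ = ∑ b : Fin m → Fin 2, ∏ i,
            ((if S j i = 0 then (if b i = 1 then (1 : ZMod 2) else 0)
              else if (b i : ℕ) ≤ (q i : ℕ) then 1 else 0) *
             (if y i ≤ b i then 1 else 0)) :=
          Fintype.prod_sum _
      _ = ∑ b : Fin m → Fin 2,
            ((∏ i, (if S j i = 0 then (if b i = 1 then (1 : ZMod 2) else 0)
               else if (b i : ℕ) ≤ (q i : ℕ) then 1 else 0)) • downRow b) y := by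
          refine Finset.sum_congr rfl fun b _ => ?_
          rw [Pi.smul_apply, smul_eq_mul, downRow, ← Finset.prod_mul_distrib]
  rw [key]
  refine Submodule.sum_mem _ fun b _ => ?_
  by_cases h : T j ≤ b
  · exact Submodule.smul_mem _ _ (Submodule.subset_span ⟨⟨b, ⟨j, h⟩⟩, GRMT_row _ _⟩)
  · have hz : (∏ i, (if S j i = 0 then (if b i = 1 then (1 : ZMod 2) else 0)
             else if (b i : ℕ) ≤ (q i : ℕ) then 1 else 0)) = 0 := by
      rw [Pi.le_def] at h
      obtain ⟨i, hi⟩ := not_forall.mp h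
      exact Finset.prod_eq_zero (Finset.mem_univ i)
        (coeff2_zero (S j i) (T j i) (b i) _ (hT j i) hi)
    rw [hz, zero_smul]
    exact Submodule.zero_mem _

/-- For a decreasing set `↓S` generated by `S₀,…,S_{u−1}` and the increasing set `↑T`
generated by the complements `T_j = 1⃗ − S_j`:
`GRM(↓S) = GRM'(↑T) = RowSpan(M(T))`. -/
theorem GRM_eq_GRMT_eq_rowSpan_Mstack {m u : ℕ}
    (S T : Fin u → (Fin m → Fin 2)) (hT : ∀ j i, T j i = 1 - S j i) :
    GRM {x | ∃ j, x ≤ S j} = GRMT {x | ∃ j, T j ≤ x} ∧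
    GRM {x | ∃ j, x ≤ S j} = rowSpan (Mstack S) := by
  have h1 : GRM {x | ∃ j, x ≤ S j} = rowSpan (Mstack S) := by
    apply le_antisymm
    · apply Submodule.span_le.mpr
      rintro _ ⟨v, rfl⟩
      rw [GRM_row]
      obtain ⟨j, hj⟩ := v.2
      exact upRow_mem S j _ hj
    · apply Submodule.span_le.mpr
      rintro _ ⟨p, rfl⟩
      exact mstack_mem_GRM S p
  have h2 : GRMT {x | ∃ j, T j ≤ x} = rowSpan (Mstack S) := by
    apply le_antisymm
    · apply Submodule.span_le.mpr
      rintro _ ⟨v, rfl⟩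
      rw [GRMT_row]
      obtain ⟨j, hj⟩ := v.2
      exact downRow_mem S T hT j _ hj
    · apply Submodule.span_le.mpr
      rintro _ ⟨p, rfl⟩
      exact mstack_mem_GRMT S T hT p
  exact ⟨h1.trans h2.symm, h1⟩
end
end
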